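/- arXiv:1708.05758 — 5 statements merged into one kernel-verified Lean document; each statement's English description precedes it below -/
import Mathlib

section
/- Let P and Q be polynomials in n real variables such that Q(y) = Σ_{|α|≤N} b_α y^α has all coefficients b_α of the same sign, Q is nonzero on [0,∞)^n (equivalently b_0 ≠ 0 when all b_α ≥ 0). Then for every multi-index k ∈ ℕ_0^n there exist n_k ∈ ℤ and C > 0 such that |(1+‖x‖²)^{n_k} T^k (x ↦ P(x_1²,…,x_n²)/Q(x_1²,…,x_n²))| ≤ C for all x ∈ (0,∞)^n, where T^k = ∏_i (x_i^{-1} ∂/∂x_i)^{k_i}. -/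
/-- Partial derivative in the `i`-th variable. -/
noncomputable def pderivI {n : ℕ} (i : Fin n) (f : (Fin n → ℝ) → ℝ) : (Fin n → ℝ) → ℝ :=
  fun x => deriv (fun t => f (Function.update x i t)) (x i)

/-- The operator `T_i f x = (x i)⁻¹ ∂f/∂x_i`. -/
noncomputable def Tvar {n : ℕ} (i : Fin n) (f : (Fin n → ℝ) → ℝ) : (Fin n → ℝ) → ℝ :=
  fun x => (x i)⁻¹ * pderivI i f x

/-- `T^k = T_1^{k_1} ∘ … ∘ T_n^{k_n}`. -/
noncomputable def Tmul {n : ℕ} (k : Fin n → ℕ) :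
    ((Fin n → ℝ) → ℝ) → ((Fin n → ℝ) → ℝ) :=
  ((List.finRange n).map (fun i => (Tvar i)^[k i])).foldr (· ∘ ·) id

/-- The open positive orthant `(0,∞)^n`. -/
def posOrthant (n : ℕ) : Set (Fin n → ℝ) := {x | ∀ i, 0 < x i}

open MvPolynomial

lemma hasDerivAt_eval_update {n : ℕ} (i : Fin n) (R : MvPolynomial (Fin n) ℝ)
    (x : Fin n → ℝ) (s : ℝ) :
    HasDerivAt (fun t => eval (Function.update x i t) R)
      (eval (Function.update x i s) (pderiv i R)) s := by
  induction R using MvPolynomial.induction_on with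
  | C a => simpa [pderiv_C] using hasDerivAt_const s a
  | add p q hp hq => simpa [Pi.add_def] using hp.add hq
  | mul_X p j hp =>
    by_cases hij : j = i
    · subst hij
      have h := hp.mul (hasDerivAt_id s)
      simp only [Pi.mul_def, pderiv_mul, pderiv_X_self, mul_one, map_add, map_mul, eval_X,
        Function.update_self] at h ⊢
      simpa [mul_comm] using h
    · have h := hp.mul_const (x j)
      simp only [pderiv_mul, pderiv_X_of_ne hij, mul_zero, add_zero, map_add, map_mul,
        eval_X, Function.update_of_ne hij] at h ⊢
      simpa using h

lemma eval_abs_le {n : ℕ} (R : MvPolynomial (Fin n) ℝ) :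
    ∃ C > (0:ℝ), ∀ y : Fin n → ℝ, (∀ i, 0 ≤ y i) →
      |eval y R| ≤ C * (1 + ∑ i, y i) ^ R.totalDegree := by
  refine ⟨(∑ d ∈ R.support, |R.coeff d|) + 1, by positivity, fun y hy => ?_⟩
  have h1 : (0:ℝ) ≤ ∑ i, y i := Finset.sum_nonneg fun i _ => hy i
  have h2 : (1:ℝ) ≤ 1 + ∑ i, y i := by linarith
  rw [eval_eq]
  calc |∑ d ∈ R.support, R.coeff d * ∏ i ∈ d.support, y i ^ d i|
      ≤ ∑ d ∈ R.support, |R.coeff d * ∏ i ∈ d.support, y i ^ d i| :=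
        Finset.abs_sum_le_sum_abs _ _
    _ ≤ ∑ d ∈ R.support, |R.coeff d| * (1 + ∑ i, y i) ^ R.totalDegree := by
        refine Finset.sum_le_sum fun d hd => ?_
        rw [abs_mul]
        refine mul_le_mul_of_nonneg_left ?_ (abs_nonneg _)
        have hprod : |∏ i ∈ d.support, y i ^ d i| ≤ ∏ i ∈ d.support, (1 + ∑ j, y j) ^ d i := by
          rw [abs_of_nonneg (Finset.prod_nonneg fun i _ => pow_nonneg (hy i) _)]
          refine Finset.prod_le_prod (fun i _ => pow_nonneg (hy i) _) fun i _ => ?_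
          refine pow_le_pow_left₀ (hy i) ?_ _
          have : y i ≤ ∑ j, y j :=
            Finset.single_le_sum (fun j _ => hy j) (Finset.mem_univ i)
          linarith
        refine hprod.trans ?_
        rw [Finset.prod_pow_eq_pow_sum]
        exact pow_le_pow_right₀ h2 (by simpa [Finsupp.sum] using le_totalDegree hd)
    _ ≤ _ := by
        rw [← Finset.sum_mul]
        have hp : (1:ℝ) ≤ (1 + ∑ i, y i) ^ R.totalDegree := one_le_pow₀ h2
        nlinarith [Finset.sum_nonneg (fun d (_ : d ∈ R.support) => abs_nonneg (R.coeff d))]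

lemma eval_Q_lower_aux {n : ℕ} (Q : MvPolynomial (Fin n) ℝ) (hsign : ∀ α, 0 ≤ Q.coeff α)
    (y : Fin n → ℝ) (hy : ∀ i, 0 ≤ y i) : Q.coeff 0 ≤ eval y Q := by
  rw [eval_eq]
  have hterm : ∀ d ∈ Q.support, (0:ℝ) ≤ Q.coeff d * ∏ i ∈ d.support, y i ^ d i :=
    fun d _ => mul_nonneg (hsign d) (Finset.prod_nonneg fun i _ => pow_nonneg (hy i) _)
  by_cases h0 : (0 : Fin n →₀ ℕ) ∈ Q.support
  · have := Finset.single_le_sum hterm h0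
    simpa using this
  · have : Q.coeff 0 = 0 := by simpa [mem_support_iff] using h0
    rw [this]
    exact Finset.sum_nonneg hterm

lemma eval_Q_lower {n : ℕ} (Q : MvPolynomial (Fin n) ℝ)
    (hsign : (∀ α, 0 ≤ Q.coeff α) ∨ (∀ α, Q.coeff α ≤ 0))
    (y : Fin n → ℝ) (hy : ∀ i, 0 ≤ y i) : |Q.coeff 0| ≤ |eval y Q| := by
  rcases hsign with h | h
  · have := eval_Q_lower_aux Q h y hy
    rw [abs_of_nonneg (h 0), abs_of_nonneg (le_trans (h 0) this)]
    exact this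
  · have h' : ∀ α, 0 ≤ (-Q).coeff α := fun α => by simpa using h α
    have := eval_Q_lower_aux (-Q) h' y hy
    simp only [coeff_neg, map_neg] at this
    rw [← abs_neg (Q.coeff 0), ← abs_neg (eval y Q)]
    rw [abs_of_nonneg (by simpa using h 0), abs_of_nonneg (le_trans (by simpa using h 0) this)]
    exact this

lemma tvar_step {n : ℕ} (Q : MvPolynomial (Fin n) ℝ)
    (hQ : ∀ y : Fin n → ℝ, (∀ i, 0 ≤ y i) → eval y Q ≠ 0)
    (i : Fin n) (R : MvPolynomial (Fin n) ℝ) (m : ℕ) (f : (Fin n → ℝ) → ℝ)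
    (hf : ∀ x ∈ posOrthant n,
      f x = eval (fun j => x j ^ 2) R / (eval (fun j => x j ^ 2) Q) ^ (m + 1)) :
    ∀ x ∈ posOrthant n, Tvar i f x =
      eval (fun j => x j ^ 2)
          (C 2 * (pderiv i R * Q - C ((m : ℝ) + 1) * R * pderiv i Q)) /
        (eval (fun j => x j ^ 2) Q) ^ (m + 2) := by
  intro x hx
  set y : Fin n → ℝ := fun j => x j ^ 2 with hy_def
  have hy : ∀ j, 0 ≤ y j := fun j => sq_nonneg _
  have hxi : x i ≠ 0 := (hx i).ne'
  have hB : eval y Q ≠ 0 := hQ y hy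
  set g : ℝ → ℝ := fun t =>
    eval (Function.update y i (t ^ 2)) R / (eval (Function.update y i (t ^ 2)) Q) ^ (m + 1)
    with hg_def
  have hupd : Function.update y i ((x i) ^ 2) = y := Function.update_eq_self i y
  have hEq : (fun t => f (Function.update x i t)) =ᶠ[nhds (x i)] g := by
    filter_upwards [Ioi_mem_nhds (hx i)] with t ht
    have hmem : Function.update x i t ∈ posOrthant n := by
      intro j
      by_cases hj : j = i
      · subst hj; simpa using ht
      · simpa [Function.update_of_ne hj] using hx j
    have hsq : (fun j => (Function.update x i t j) ^ 2) = Function.update y i (t ^ 2) := by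
      funext j
      by_cases hj : j = i
      · subst hj; simp
      · simp [Function.update_of_ne hj, hy_def]
    rw [hf _ hmem, hsq]
  have ht2 : HasDerivAt (fun t : ℝ => t ^ 2) (2 * x i) (x i) := by
    simpa using hasDerivAt_pow 2 (x i)
  have hA : HasDerivAt (fun s => eval (Function.update y i s) R)
      (eval y (pderiv i R)) ((x i) ^ 2) := by
    have h := hasDerivAt_eval_update i R y ((x i) ^ 2)
    rwa [hupd] at h
  have hBd : HasDerivAt (fun s => eval (Function.update y i s) Q)
      (eval y (pderiv i Q)) ((x i) ^ 2) := by
    have h := hasDerivAt_eval_update i Q y ((x i) ^ 2)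
    rwa [hupd] at h
  have hAc : HasDerivAt (fun t : ℝ => eval (Function.update y i (t ^ 2)) R)
      (eval y (pderiv i R) * (2 * x i)) (x i) :=
    HasDerivAt.comp (h₂ := fun s => eval (Function.update y i s) R)
      (h := fun t : ℝ => t ^ 2) (x i) hA ht2
  have hBc : HasDerivAt (fun t : ℝ => eval (Function.update y i (t ^ 2)) Q)
      (eval y (pderiv i Q) * (2 * x i)) (x i) :=
    HasDerivAt.comp (h₂ := fun s => eval (Function.update y i s) Q)
      (h := fun t : ℝ => t ^ 2) (x i) hBd ht2
  have hBpow : HasDerivAt (fun t : ℝ => (eval (Function.update y i (t ^ 2)) Q) ^ (m + 1))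
      ((m + 1 : ℕ) * (eval y Q) ^ m * (eval y (pderiv i Q) * (2 * x i))) (x i) := by
    have h := hBc.pow (m + 1)
    rw [hupd] at h
    refine h.congr_deriv ?_
    push_cast; ring
  have hne : (eval (Function.update y i ((x i) ^ 2)) Q) ^ (m + 1) ≠ 0 := by
    rw [hupd]; exact pow_ne_zero _ hB
  have hg : HasDerivAt g
      ((eval y (pderiv i R) * (2 * x i) * (eval y Q) ^ (m + 1) -
          eval y R * ((m + 1 : ℕ) * (eval y Q) ^ m * (eval y (pderiv i Q) * (2 * x i)))) /
        ((eval y Q) ^ (m + 1)) ^ 2) (x i) := by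
    have h := hAc.div hBpow hne
    rwa [hupd] at h
  have hderiv : deriv (fun t => f (Function.update x i t)) (x i) = deriv g (x i) :=
    hEq.deriv_eq
  show (x i)⁻¹ * deriv (fun t => f (Function.update x i t)) (x i) = _
  rw [hderiv, hg.deriv]
  simp only [eval_mul, eval_sub, eval_C, map_mul, map_sub]
  push_cast
  field_simp
  ring

/-- A function is "nice" if on the positive orthant it agrees with
`R(x²)/Q(x²)^(m+1)` for some polynomial `R` and `m : ℕ`. -/
def NiceFn {n : ℕ} (Q : MvPolynomial (Fin n) ℝ) (f : (Fin n → ℝ) → ℝ) : Prop :=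
  ∃ (R : MvPolynomial (Fin n) ℝ) (m : ℕ), ∀ x ∈ posOrthant n,
    f x = eval (fun j => x j ^ 2) R / (eval (fun j => x j ^ 2) Q) ^ (m + 1)

lemma niceFn_tvar {n : ℕ} (Q : MvPolynomial (Fin n) ℝ)
    (hQ : ∀ y : Fin n → ℝ, (∀ i, 0 ≤ y i) → eval y Q ≠ 0) (i : Fin n)
    {f : (Fin n → ℝ) → ℝ} (hf : NiceFn Q f) : NiceFn Q (Tvar i f) := by
  obtain ⟨R, m, hR⟩ := hf
  exact ⟨C 2 * (pderiv i R * Q - C ((m : ℝ) + 1) * R * pderiv i Q), m + 1,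
    tvar_step Q hQ i R m f hR⟩

lemma niceFn_tvar_iter {n : ℕ} (Q : MvPolynomial (Fin n) ℝ)
    (hQ : ∀ y : Fin n → ℝ, (∀ i, 0 ≤ y i) → eval y Q ≠ 0) (i : Fin n) (j : ℕ)
    {f : (Fin n → ℝ) → ℝ} (hf : NiceFn Q f) : NiceFn Q ((Tvar i)^[j] f) := by
  induction j with
  | zero => simpa using hf
  | succ j ih =>
    rw [Function.iterate_succ_apply']
    exact niceFn_tvar Q hQ i ih

lemma niceFn_foldr {n : ℕ} (Q : MvPolynomial (Fin n) ℝ)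
    (hQ : ∀ y : Fin n → ℝ, (∀ i, 0 ≤ y i) → eval y Q ≠ 0) (k : Fin n → ℕ)
    (l : List (Fin n)) {f : (Fin n → ℝ) → ℝ} (hf : NiceFn Q f) :
    NiceFn Q ((l.map (fun i => (Tvar i)^[k i])).foldr (· ∘ ·) id f) := by
  induction l with
  | nil => simpa using hf
  | cons a l ih =>
    simp only [List.map_cons, List.foldr_cons, Function.comp_apply]
    exact niceFn_tvar_iter Q hQ a (k a) ih

/-- if all coefficients of `Q` have the same sign and `Q` has no zeros
on `[0,∞)^n`, then `x ↦ P(x²)/Q(x²)` lies in the multiplier space `𝒪`: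
for each multi-index `k` there are `n_k ∈ ℤ`, `C > 0` with
`|(1+‖x‖²)^{n_k} T^k (P(x²)/Q(x²))| ≤ C` on `(0,∞)^n`. -/
theorem stmt_5 (n : ℕ) (P Q : MvPolynomial (Fin n) ℝ)
    (hsign : (∀ α, 0 ≤ Q.coeff α) ∨ (∀ α, Q.coeff α ≤ 0))
    (hQ : ∀ x : Fin n → ℝ, (∀ i, 0 ≤ x i) → MvPolynomial.eval x Q ≠ 0)
    (k : Fin n → ℕ) :
    ∃ (nk : ℤ) (C : ℝ), 0 < C ∧ ∀ x ∈ posOrthant n,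
      |(1 + ∑ i, x i ^ 2) ^ nk *
        Tmul k (fun y => MvPolynomial.eval (fun i => y i ^ 2) P /
          MvPolynomial.eval (fun i => y i ^ 2) Q) x| ≤ C := by
  have hnice0 : NiceFn Q (fun y => eval (fun i => y i ^ 2) P / eval (fun i => y i ^ 2) Q) :=
    ⟨P, 0, fun x _ => by simp⟩
  have hnice : NiceFn Q (Tmul k (fun y => eval (fun i => y i ^ 2) P /
      eval (fun i => y i ^ 2) Q)) := niceFn_foldr Q hQ k (List.finRange n) hnice0
  obtain ⟨R, m, hR⟩ := hnice
  obtain ⟨CR, hCR, hCRle⟩ := eval_abs_le R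
  set b : ℝ := |Q.coeff 0| with hb_def
  have hb : 0 < b := by
    have h0 : eval (0 : Fin n → ℝ) Q ≠ 0 := hQ 0 fun i => le_refl 0
    have : Q.coeff 0 ≠ 0 := by
      rwa [eval_zero] at h0
    exact abs_pos.mpr this
  refine ⟨-(R.totalDegree : ℤ), CR / b ^ (m + 1), by positivity, fun x hx => ?_⟩
  rw [hR x hx]
  set y : Fin n → ℝ := fun j => x j ^ 2 with hy_def
  have hy : ∀ j, 0 ≤ y j := fun j => sq_nonneg _
  have hsum : ∑ i, x i ^ 2 = ∑ i, y i := rfl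
  have h1s : (0:ℝ) < 1 + ∑ i, y i :=
    lt_of_lt_of_le one_pos (le_add_of_nonneg_right (Finset.sum_nonneg fun i _ => hy i))
  have hzp : (1 + ∑ i, y i) ^ (-(R.totalDegree : ℤ)) =
      ((1 + ∑ i, y i) ^ R.totalDegree)⁻¹ := by
    rw [zpow_neg, zpow_natCast]
  have hBlow : b ≤ |eval y Q| := eval_Q_lower Q hsign y hy
  have hBne : eval y Q ≠ 0 := hQ y hy
  have hBpow : b ^ (m + 1) ≤ |eval y Q| ^ (m + 1) := pow_le_pow_left₀ hb.le hBlow _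
  have hApos : |eval y R| ≤ CR * (1 + ∑ i, y i) ^ R.totalDegree := hCRle y hy
  rw [hsum, abs_mul, hzp, abs_div, abs_pow]
  rw [abs_of_nonneg (inv_nonneg.mpr (pow_nonneg h1s.le _))]
  have hstep : |eval y R| / |eval y Q| ^ (m + 1) ≤
      CR * (1 + ∑ i, y i) ^ R.totalDegree / b ^ (m + 1) :=
    div_le_div₀ (by positivity) hApos (by positivity) hBpow
  calc ((1 + ∑ i, y i) ^ R.totalDegree)⁻¹ * (|eval y R| / |eval y Q| ^ (m + 1))
      ≤ ((1 + ∑ i, y i) ^ R.totalDegree)⁻¹ *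
        (CR * (1 + ∑ i, y i) ^ R.totalDegree / b ^ (m + 1)) :=
        mul_le_mul_of_nonneg_left hstep (by positivity)
    _ = CR / b ^ (m + 1) := by
        have hpne : ((1 + ∑ i, y i) ^ R.totalDegree) ≠ 0 := by positivity
        field_simp
end

section
/- For the one-dimensional Bessel operator S_μ = d²/dx² − (4μ²−1)/(4x²) acting on smooth functions on (0,∞), and the operator T = x^{-1} d/dx, for every k ∈ ℕ_0 there exist real constants b_{l,k} (0 ≤ l ≤ k), depending only on μ, such that x^{-μ-1/2} S_μ^k φ(x) = Σ_{l=0}^{k} b_{l,k} x^{2l} T^{k+l}{x^{-μ-1/2} φ(x)} for all smooth φ on (0,∞). -/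
open Set

/-- The operator `T f x = x⁻¹ * f'(x)`. -/
noncomputable def Tone (f : ℝ → ℝ) : ℝ → ℝ := fun x => x⁻¹ * deriv f x

noncomputable def Sone (μ : ℝ) (f : ℝ → ℝ) : ℝ → ℝ :=
  fun x => deriv (deriv f) x - (4 * μ ^ 2 - 1) / (4 * x ^ 2) * f x

/-- smoothness on (0,∞) -/
def Sm (f : ℝ → ℝ) : Prop := ContDiffOn ℝ (⊤ : ℕ∞) f (Ioi 0)

noncomputable def Lf (μ : ℝ) (f : ℝ → ℝ) : ℝ → ℝ :=
  fun x => x ^ 2 * Tone (Tone f) x + (2 * μ + 2) * Tone f x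

lemma Sm.derivAt {f : ℝ → ℝ} (h : Sm f) {x : ℝ} (hx : 0 < x) :
    HasDerivAt f (deriv f x) x :=
  ((h.contDiffAt (Ioi_mem_nhds hx)).differentiableAt (by simp)).hasDerivAt

lemma Sm.deriv {f : ℝ → ℝ} (h : Sm f) : Sm (deriv f) :=
  h.deriv_of_isOpen isOpen_Ioi (by simp)

lemma Sm.diffAt {f : ℝ → ℝ} (h : Sm f) {x : ℝ} (hx : 0 < x) : DifferentiableAt ℝ f x :=
  (h.contDiffAt (Ioi_mem_nhds hx)).differentiableAt (by simp)

lemma sm_inv : Sm (fun y : ℝ => y⁻¹) := by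
  intro y hy
  exact (contDiffAt_inv ℝ (ne_of_gt hy)).contDiffWithinAt

lemma Sm.tone {f : ℝ → ℝ} (h : Sm f) : Sm (Tone f) :=
  sm_inv.mul h.deriv

lemma Sm.toneIter {f : ℝ → ℝ} (h : Sm f) (m : ℕ) : Sm (Tone^[m] f) := by
  induction m with
  | zero => exact h
  | succ n ih => rw [Function.iterate_succ_apply']; exact ih.tone

lemma Sm.sone {f : ℝ → ℝ} (h : Sm f) (μ : ℝ) : Sm (Sone μ f) := by
  have h1 : Sm (fun x : ℝ => (4 * μ ^ 2 - 1) / (4 * x ^ 2)) := by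
    intro y hy
    apply ContDiffWithinAt.div
    · exact contDiffWithinAt_const
    · exact (contDiff_const.mul (contDiff_id.pow 2)).contDiffWithinAt
    · have : (0:ℝ) < y := hy
      positivity
  exact h.deriv.deriv.sub (h1.mul h)

lemma Sm.soneIter {f : ℝ → ℝ} (h : Sm f) (μ : ℝ) (k : ℕ) : Sm ((Sone μ)^[k] f) := by
  induction k with
  | zero => exact h
  | succ n ih => rw [Function.iterate_succ_apply']; exact ih.sone μ

lemma tone_congr {f g : ℝ → ℝ} (h : EqOn f g (Ioi 0)) {x : ℝ} (hx : 0 < x) :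
    Tone f x = Tone g x := by
  unfold Tone
  rw [Filter.EventuallyEq.deriv_eq (Filter.eventually_of_mem (isOpen_Ioi.mem_nhds hx) h)]

lemma lf_congr {μ : ℝ} {f g : ℝ → ℝ} (h : EqOn f g (Ioi 0)) {x : ℝ} (hx : 0 < x) :
    Lf μ f x = Lf μ g x := by
  have ht : EqOn (Tone f) (Tone g) (Ioi 0) := fun y hy => tone_congr h hy
  unfold Lf
  rw [tone_congr ht hx, tone_congr h hx]

lemma tone_add {F G : ℝ → ℝ} {x : ℝ} (hF : DifferentiableAt ℝ F x)
    (hG : DifferentiableAt ℝ G x) :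
    Tone (fun y => F y + G y) x = Tone F x + Tone G x := by
  unfold Tone; rw [deriv_fun_add hF hG]; ring

lemma tone_const_mul (a : ℝ) {F : ℝ → ℝ} {x : ℝ} (hF : DifferentiableAt ℝ F x) :
    Tone (fun y => a * F y) x = a * Tone F x := by
  unfold Tone; rw [deriv_const_mul a hF]; ring

lemma tone_sum {ι : Type*} (s : Finset ι) (f : ι → ℝ → ℝ) {x : ℝ}
    (hf : ∀ i ∈ s, DifferentiableAt ℝ (f i) x) :
    Tone (fun y => ∑ i ∈ s, f i y) x = ∑ i ∈ s, Tone (f i) x := by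
  unfold Tone; rw [deriv_fun_sum hf, Finset.mul_sum]

lemma lf_sum {μ : ℝ} {ι : Type*} (s : Finset ι) (f : ι → ℝ → ℝ)
    (hf : ∀ i ∈ s, Sm (f i)) {x : ℝ} (hx : 0 < x) :
    Lf μ (fun y => ∑ i ∈ s, f i y) x = ∑ i ∈ s, Lf μ (f i) x := by
  have h1 : EqOn (Tone (fun y => ∑ i ∈ s, f i y)) (fun y => ∑ i ∈ s, Tone (f i) y) (Ioi 0) :=
    fun y hy => tone_sum s f (fun i hi => (hf i hi).diffAt hy)
  unfold Lf
  rw [tone_congr h1 hx, tone_sum s _ (fun i hi => ((hf i hi).tone).diffAt hx),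
    tone_sum s f (fun i hi => (hf i hi).diffAt hx), Finset.mul_sum, Finset.mul_sum,
    ← Finset.sum_add_distrib]

lemma lf_const_mul {μ : ℝ} (a : ℝ) {F : ℝ → ℝ} (hF : Sm F) {x : ℝ} (hx : 0 < x) :
    Lf μ (fun y => a * F y) x = a * Lf μ F x := by
  have h1 : EqOn (Tone (fun y => a * F y)) (fun y => a * Tone F y) (Ioi 0) :=
    fun y hy => tone_const_mul a (hF.diffAt hy)
  unfold Lf
  rw [tone_congr h1 hx, tone_const_mul a (hF.tone.diffAt hx), tone_const_mul a (hF.diffAt hx)]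
  ring


/-- derivative helper: Tone of y^n * h -/
lemma tone_pow_mul {h : ℝ → ℝ} (hh : Sm h) (n : ℕ) {x : ℝ} (hx : 0 < x) :
    Tone (fun y => y ^ n * h y) x
      = (n : ℝ) * (x ^ n / x ^ 2) * h x + x ^ n * Tone h x := by
  have hd : HasDerivAt (fun y => y ^ n * h y)
      ((n : ℝ) * x ^ (n - 1) * h x + x ^ n * deriv h x) x :=
    (hasDerivAt_pow n x).mul (hh.derivAt hx)
  unfold Tone
  rw [hd.deriv]
  rcases n with _ | m
  · simp
  · have h1 : x ^ (m + 1 - 1) = x ^ (m + 1) / x := by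
      simp [pow_succ, mul_div_assoc, div_self hx.ne']
    rw [h1]
    field_simp

/-- The function identity for Tone on even monomials, on Ioi 0. -/
lemma tone_pow_mul_eqOn {h : ℝ → ℝ} (hh : Sm h) (m : ℕ) :
    EqOn (Tone (fun y => y ^ (2 * m + 2) * h y))
      (fun y => (2 * (m : ℝ) + 2) * (y ^ (2 * m) * h y) + y ^ (2 * m + 2) * Tone h y)
      (Ioi 0) := by
  intro y hy
  have hy' : (0 : ℝ) < y := hy
  rw [tone_pow_mul hh (2 * m + 2) hy']
  have : (y : ℝ) ^ (2 * m + 2) / y ^ 2 = y ^ (2 * m) := by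
    rw [pow_add]
    field_simp
  rw [this]
  push_cast
  ring

/-- Key per-term lemma: Lf applied to y^(2l) * h. -/
lemma lf_monomial {μ : ℝ} {h : ℝ → ℝ} (hh : Sm h) (l : ℕ) {x : ℝ} (hx : 0 < x) :
    Lf μ (fun y => y ^ (2 * l) * h y) x
      = x ^ (2 * l + 2) * Tone (Tone h) x
        + (4 * (l : ℝ) + 2 * μ + 2) * x ^ (2 * l) * Tone h x
        + 4 * (l : ℝ) * ((l : ℝ) + μ) * (x ^ (2 * l) / x ^ 2) * h x := by
  rcases l with _ | m
  · -- l = 0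
    have he : EqOn (fun y : ℝ => y ^ (2 * 0) * h y) h (Ioi 0) := by
      intro y hy; simp
    rw [lf_congr he hx]
    unfold Lf
    push_cast
    ring
  · -- l = m + 1
    have hTh : Sm (Tone h) := hh.tone
    have hpm : Sm (fun y : ℝ => y ^ (2 * m) * h y) :=
      ((contDiff_id.pow (2 * m)).contDiffOn).mul hh
    have hpt : Sm (fun y : ℝ => y ^ (2 * m + 2) * Tone h y) :=
      ((contDiff_id.pow (2 * m + 2)).contDiffOn).mul hTh
    unfold Lf
    simp only [show 2 * (m + 1) = 2 * m + 2 from rfl, show 2 * (m + 1) + 2 = 2 * m + 2 + 2 from rfl]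
    rw [tone_congr (tone_pow_mul_eqOn hh m) hx]
    rw [tone_pow_mul hh (2 * m + 2) hx]
    have hsplit : Tone (fun y => (2 * (m : ℝ) + 2) * (y ^ (2 * m) * h y)
          + y ^ (2 * m + 2) * Tone h y) x
        = (2 * (m : ℝ) + 2) * Tone (fun y => y ^ (2 * m) * h y) x
          + Tone (fun y => y ^ (2 * m + 2) * Tone h y) x := by
      rw [tone_add ((hpm.diffAt hx).const_mul _) (hpt.diffAt hx),
        tone_const_mul _ (hpm.diffAt hx)]
    rw [hsplit, tone_pow_mul hh (2 * m) hx, tone_pow_mul hTh (2 * m + 2) hx]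
    have e1 : x ^ (2 * m + 2) / x ^ 2 = x ^ (2 * m) := by
      rw [pow_add]; field_simp
    have e3 : x ^ (2 * m + 2 + 2) = x ^ (2 * m + 2) * x ^ 2 := by
      rw [← pow_add]
    rw [e3, e1]
    push_cast
    field_simp
    ring


lemma sm_psi {μ : ℝ} {φ : ℝ → ℝ} (hφ : Sm φ) :
    Sm (fun y : ℝ => y ^ (-μ - 1/2) * φ y) := by
  have h1 : Sm (fun y : ℝ => y ^ (-μ - 1/2)) := fun y hy =>
    (Real.contDiffAt_rpow_const_of_ne (ne_of_gt hy)).contDiffWithinAt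
  exact h1.mul hφ

lemma conj_one {μ : ℝ} {φ : ℝ → ℝ} (hφ : Sm φ) {x : ℝ} (hx : 0 < x) :
    x ^ (-μ - 1/2) * Sone μ φ x = Lf μ (fun y => y ^ (-μ - 1/2) * φ y) x := by
  set p : ℝ := -μ - 1/2 with hp
  set ψ : ℝ → ℝ := fun y => y ^ p * φ y with hψ
  -- the derivative of ψ on Ioi 0
  have hD : ∀ y : ℝ, 0 < y →
      HasDerivAt ψ (p * y ^ (p - 1) * φ y + y ^ p * deriv φ y) y := by
    intro y hy
    exact (Real.hasDerivAt_rpow_const (Or.inl hy.ne')).mul (hφ.derivAt hy)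
  -- Tone ψ on Ioi 0
  have hT1 : EqOn (Tone ψ) (fun y => p * y ^ (p - 1 - 1) * φ y + y ^ (p - 1) * deriv φ y)
      (Ioi 0) := by
    intro y hy
    have hy' : (0 : ℝ) < y := hy
    unfold Tone
    rw [(hD y hy').deriv]
    have e1 : y ^ (p - 1 - 1) = y ^ (p - 1) / y := by
      rw [Real.rpow_sub hy', Real.rpow_one]
    have e2 : y ^ (p - 1) = y ^ p / y := by
      rw [Real.rpow_sub hy', Real.rpow_one]
    simp only [e1, e2]
    field_simp
  -- derivative of the expression for Tone ψ
  have hD2 : HasDerivAt (fun y => p * y ^ (p - 1 - 1) * φ y + y ^ (p - 1) * deriv φ y)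
      ((p * ((p - 1 - 1) * x ^ (p - 1 - 1 - 1)) * φ x + p * x ^ (p - 1 - 1) * deriv φ x)
        + ((p - 1) * x ^ (p - 1 - 1) * deriv φ x + x ^ (p - 1) * deriv (deriv φ) x)) x := by
    have h1 : HasDerivAt (fun y : ℝ => p * y ^ (p - 1 - 1))
        (p * ((p - 1 - 1) * x ^ (p - 1 - 1 - 1))) x :=
      (Real.hasDerivAt_rpow_const (Or.inl hx.ne')).const_mul p
    have h2 : HasDerivAt (fun y : ℝ => y ^ (p - 1)) ((p - 1) * x ^ (p - 1 - 1)) x :=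
      Real.hasDerivAt_rpow_const (Or.inl hx.ne')
    exact (h1.mul (hφ.derivAt hx)).add (h2.mul (hφ.deriv.derivAt hx))
  have hT2 : Tone (Tone ψ) x
      = x⁻¹ * ((p * ((p - 1 - 1) * x ^ (p - 1 - 1 - 1)) * φ x + p * x ^ (p - 1 - 1) * deriv φ x)
        + ((p - 1) * x ^ (p - 1 - 1) * deriv φ x + x ^ (p - 1) * deriv (deriv φ) x)) := by
    rw [tone_congr hT1 hx]
    unfold Tone
    rw [hD2.deriv]
  have hT1x := hT1 (mem_Ioi.mpr hx)
  unfold Lf Sone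
  rw [hT2, hT1x]
  -- express all rpow powers in terms of x ^ p
  have e1 : x ^ (p - 1) = x ^ p / x := by
    rw [Real.rpow_sub hx, Real.rpow_one]
  have e2 : x ^ (p - 1 - 1) = x ^ p / x / x := by
    rw [Real.rpow_sub hx, Real.rpow_one, e1]
  have e3 : x ^ (p - 1 - 1 - 1) = x ^ p / x / x / x := by
    rw [Real.rpow_sub hx, Real.rpow_one, e2]
  simp only [e1, e2, e3]
  generalize x ^ p = q
  simp only [hp]
  have hxne : x ≠ 0 := hx.ne'
  field_simp
  ring


lemma conj_iter {μ : ℝ} {φ : ℝ → ℝ} (hφ : Sm φ) (k : ℕ) :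
    EqOn (fun x => x ^ (-μ - 1/2) * (Sone μ)^[k] φ x)
      ((Lf μ)^[k] (fun y => y ^ (-μ - 1/2) * φ y)) (Ioi 0) := by
  induction k with
  | zero => intro x hx; rfl
  | succ n ih =>
    intro x hx
    have hx' : (0 : ℝ) < x := hx
    calc (fun x => x ^ (-μ - 1/2) * (Sone μ)^[n+1] φ x) x
        = x ^ (-μ - 1/2) * Sone μ ((Sone μ)^[n] φ) x := by
          rw [Function.iterate_succ_apply']
      _ = Lf μ (fun y => y ^ (-μ - 1/2) * (Sone μ)^[n] φ y) x :=
          conj_one (hφ.soneIter μ n) hx'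
      _ = Lf μ ((Lf μ)^[n] (fun y => y ^ (-μ - 1/2) * φ y)) x :=
          lf_congr ih hx'
      _ = (Lf μ)^[n+1] (fun y => y ^ (-μ - 1/2) * φ y) x := by
          rw [Function.iterate_succ_apply']

lemma sum_formula (μ : ℝ) (k : ℕ) :
    ∃ b : ℕ → ℝ, (∀ l, k < l → b l = 0) ∧ ∀ ψ : ℝ → ℝ, Sm ψ → ∀ x : ℝ, 0 < x →
      (Lf μ)^[k] ψ x = ∑ l ∈ Finset.range (k + 1),
        b l * x ^ (2 * l) * Tone^[k + l] ψ x := by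
  induction k with
  | zero =>
    refine ⟨fun l => if l = 0 then 1 else 0, fun l hl => if_neg (by omega), ?_⟩
    intro ψ hψ x hx
    simp
  | succ k ih =>
    obtain ⟨b, hb0, hb⟩ := ih
    refine ⟨fun l => (if l = 0 then 0 else b (l - 1)) + (4 * (l : ℝ) + 2 * μ + 2) * b l
        + 4 * ((l : ℝ) + 1) * ((l : ℝ) + 1 + μ) * b (l + 1), fun l hl => ?_, ?_⟩
    · have h1 : b (l - 1) = 0 := hb0 _ (by omega)
      have h2 : b l = 0 := hb0 _ (by omega)
      have h3 : b (l + 1) = 0 := hb0 _ (by omega)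
      simp only [h1, h2, h3]
      rcases eq_or_ne l 0 with rfl | hne
      · omega
      · rw [if_neg hne]; ring
    intro ψ hψ x hx
    -- smoothness of the summands
    have hterm : ∀ l : ℕ, Sm (fun y : ℝ => b l * y ^ (2 * l) * Tone^[k + l] ψ y) := by
      intro l
      have h0 : Sm (fun y : ℝ => b l * y ^ (2 * l)) :=
        ((contDiff_const (c := b l)).mul (contDiff_id.pow (2 * l))).contDiffOn
      exact h0.mul (hψ.toneIter (k + l))
    -- step 1: iterate and congruence
    have step1 : (Lf μ)^[k+1] ψ x
        = ∑ l ∈ Finset.range (k + 1),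
            Lf μ (fun y => b l * y ^ (2 * l) * Tone^[k + l] ψ y) x := by
      rw [Function.iterate_succ_apply']
      have hEq : EqOn ((Lf μ)^[k] ψ)
          (fun y => ∑ l ∈ Finset.range (k + 1), b l * y ^ (2 * l) * Tone^[k + l] ψ y)
          (Ioi 0) := fun y hy => hb ψ hψ y hy
      rw [lf_congr hEq hx]
      exact lf_sum _ _ (fun i _ => hterm i) hx
    -- step 2: per-term evaluation
    have step2 : ∀ l : ℕ,
        Lf μ (fun y => b l * y ^ (2 * l) * Tone^[k + l] ψ y) x
          = b l * (x ^ (2 * l + 2) * Tone^[k + l + 2] ψ x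
              + (4 * (l : ℝ) + 2 * μ + 2) * x ^ (2 * l) * Tone^[k + l + 1] ψ x
              + 4 * (l : ℝ) * ((l : ℝ) + μ) * (x ^ (2 * l) / x ^ 2) * Tone^[k + l] ψ x) := by
      intro l
      have h1 : Lf μ (fun y => b l * (y ^ (2 * l) * Tone^[k + l] ψ y)) x
          = b l * Lf μ (fun y => y ^ (2 * l) * Tone^[k + l] ψ y) x :=
        lf_const_mul (b l) (((contDiff_id.pow (2 * l)).contDiffOn).mul (hψ.toneIter (k + l))) hx
      have h2 := lf_monomial (μ := μ) (hψ.toneIter (k + l)) l hx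
      have h3 : (fun y => b l * y ^ (2 * l) * Tone^[k + l] ψ y)
          = (fun y => b l * (y ^ (2 * l) * Tone^[k + l] ψ y)) := by
        funext y; ring
      rw [h3, h1, h2]
      rw [show Tone (Tone (Tone^[k+l] ψ)) = Tone^[k+l+2] ψ by
            rw [Function.iterate_succ_apply', Function.iterate_succ_apply'],
          show Tone (Tone^[k+l] ψ) = Tone^[k+l+1] ψ by rw [Function.iterate_succ_apply']]
    rw [step1, Finset.sum_congr rfl (fun l _ => step2 l)]
    have lhs_eq :
        ∑ l ∈ Finset.range (k + 1), b l *
            (x ^ (2 * l + 2) * Tone^[k + l + 2] ψ x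
              + (4 * (l : ℝ) + 2 * μ + 2) * x ^ (2 * l) * Tone^[k + l + 1] ψ x
              + 4 * (l : ℝ) * ((l : ℝ) + μ) * (x ^ (2 * l) / x ^ 2) * Tone^[k + l] ψ x)
          = (∑ l ∈ Finset.range (k + 1), b l * (x ^ (2 * l + 2) * Tone^[k + l + 2] ψ x))
            + (∑ l ∈ Finset.range (k + 1),
                (4 * (l : ℝ) + 2 * μ + 2) * b l * (x ^ (2 * l) * Tone^[k + l + 1] ψ x))
            + (∑ l ∈ Finset.range (k + 1),
                4 * (l : ℝ) * ((l : ℝ) + μ) * b l * (x ^ (2 * l) / x ^ 2 * Tone^[k + l] ψ x)) := by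
      rw [← Finset.sum_add_distrib, ← Finset.sum_add_distrib]
      exact Finset.sum_congr rfl fun l _ => by ring
    have rhs_eq :
        ∑ l ∈ Finset.range (k + 1 + 1),
            ((if l = 0 then 0 else b (l - 1)) + (4 * (l : ℝ) + 2 * μ + 2) * b l
              + 4 * ((l : ℝ) + 1) * ((l : ℝ) + 1 + μ) * b (l + 1)) * x ^ (2 * l)
              * Tone^[k + 1 + l] ψ x
          = (∑ l ∈ Finset.range (k + 1 + 1),
                (if l = 0 then 0 else b (l - 1)) * (x ^ (2 * l) * Tone^[k + 1 + l] ψ x))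
            + (∑ l ∈ Finset.range (k + 1 + 1),
                (4 * (l : ℝ) + 2 * μ + 2) * b l * (x ^ (2 * l) * Tone^[k + 1 + l] ψ x))
            + (∑ l ∈ Finset.range (k + 1 + 1),
                4 * ((l : ℝ) + 1) * ((l : ℝ) + 1 + μ) * b (l + 1)
                  * (x ^ (2 * l) * Tone^[k + 1 + l] ψ x)) := by
      rw [← Finset.sum_add_distrib, ← Finset.sum_add_distrib]
      exact Finset.sum_congr rfl fun l _ => by ring
    rw [lhs_eq, rhs_eq]
    have E1 : ∑ l ∈ Finset.range (k + 1), b l * (x ^ (2 * l + 2) * Tone^[k + l + 2] ψ x)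
        = ∑ l ∈ Finset.range (k + 1 + 1),
            (if l = 0 then 0 else b (l - 1)) * (x ^ (2 * l) * Tone^[k + 1 + l] ψ x) := by
      rw [Finset.sum_range_succ' ((fun l =>
        (if l = 0 then 0 else b (l - 1)) * (x ^ (2 * l) * Tone^[k + 1 + l] ψ x)) : ℕ → ℝ) (k + 1)]
      simp only [Nat.succ_ne_zero, ite_false, ite_true, eq_self_iff_true,
        Nat.add_sub_cancel, zero_mul, add_zero]
      refine Finset.sum_congr rfl fun i _ => ?_
      rw [show k + 1 + (i + 1) = k + i + 2 by ring, show 2 * (i + 1) = 2 * i + 2 from rfl]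
    have E2 : ∑ l ∈ Finset.range (k + 1),
          (4 * (l : ℝ) + 2 * μ + 2) * b l * (x ^ (2 * l) * Tone^[k + l + 1] ψ x)
        = ∑ l ∈ Finset.range (k + 1 + 1),
            (4 * (l : ℝ) + 2 * μ + 2) * b l * (x ^ (2 * l) * Tone^[k + 1 + l] ψ x) := by
      rw [Finset.sum_range_succ (fun l =>
        (4 * (l : ℝ) + 2 * μ + 2) * b l * (x ^ (2 * l) * Tone^[k + 1 + l] ψ x)) (k + 1)]
      rw [hb0 (k + 1) (by omega)]
      simp only [mul_zero, zero_mul, add_zero]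
      refine Finset.sum_congr rfl fun i _ => ?_
      rw [show k + 1 + i = k + i + 1 by ring]
    have E3 : ∑ l ∈ Finset.range (k + 1),
          4 * (l : ℝ) * ((l : ℝ) + μ) * b l * (x ^ (2 * l) / x ^ 2 * Tone^[k + l] ψ x)
        = ∑ l ∈ Finset.range (k + 1 + 1),
            4 * ((l : ℝ) + 1) * ((l : ℝ) + 1 + μ) * b (l + 1)
              * (x ^ (2 * l) * Tone^[k + 1 + l] ψ x) := by
      rw [Finset.sum_range_succ' (fun l =>
        4 * (l : ℝ) * ((l : ℝ) + μ) * b l * (x ^ (2 * l) / x ^ 2 * Tone^[k + l] ψ x)) k]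
      rw [Finset.sum_range_succ (fun l =>
        4 * ((l : ℝ) + 1) * ((l : ℝ) + 1 + μ) * b (l + 1)
          * (x ^ (2 * l) * Tone^[k + 1 + l] ψ x)) (k + 1)]
      rw [Finset.sum_range_succ (fun l =>
        4 * ((l : ℝ) + 1) * ((l : ℝ) + 1 + μ) * b (l + 1)
          * (x ^ (2 * l) * Tone^[k + 1 + l] ψ x)) k]
      rw [hb0 (k + 1) (by omega), hb0 (k + 2) (by omega)]
      norm_num
      refine Finset.sum_congr rfl fun i _ => ?_
      have hx2 : x ^ (2 * (i + 1)) / x ^ 2 = x ^ (2 * i) := by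
        rw [show 2 * (i + 1) = 2 * i + 2 from rfl, pow_add]
        field_simp
      rw [hx2, show k + (i + 1) = k + 1 + i by ring]
    rw [E1, E2, E3]

/-- for every `k` there are constants `b_{l,k}` (depending only on `μ`)
such that `x^{-μ-1/2} S_μ^k φ(x) = Σ_{l=0}^{k} b_{l,k} x^{2l} T^{k+l}{x^{-μ-1/2}φ(x)}`
for all smooth `φ` on `(0,∞)`. -/
theorem stmt_8 (μ : ℝ) (hμ : -(1/2 : ℝ) ≤ μ) (k : ℕ) :
    ∃ b : ℕ → ℝ, ∀ φ : ℝ → ℝ, ContDiffOn ℝ (⊤ : ℕ∞) φ (Ioi 0) → ∀ x : ℝ, 0 < x →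
      x ^ (-μ - 1/2) * (Sone μ)^[k] φ x =
        ∑ l ∈ Finset.range (k + 1),
          b l * x ^ (2 * l) * Tone^[k + l] (fun y => y ^ (-μ - 1/2) * φ y) x := by
  obtain ⟨b, -, hb⟩ := sum_formula μ k
  refine ⟨b, fun φ hφ x hx => ?_⟩
  have hψ : Sm (fun y : ℝ => y ^ (-μ - 1/2) * φ y) := sm_psi hφ
  have h1 := conj_iter (μ := μ) hφ k (mem_Ioi.mpr hx)
  exact h1.trans (hb _ hψ x hx)
end

section
/- Let ψ : (0,1]^n → ℝ be smooth such that for every subset of variables, the corresponding mixed partial derivative satisfies |∂^{|I|}ψ/∂x_I (x)| ≤ M ∏_{i∈I} x_i on (0,1]^n. Then ψ extends continuously to [0,1]^n; in particular lim_{x→0, x>0} ψ(x) exists. -/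
open Set Filter

/-- Iterated mixed partial derivative `∂^{|I|}/∂x_I` over a set `I` of variables. -/
noncomputable def pderivSet {n : ℕ} (I : Finset (Fin n)) (f : (Fin n → ℝ) → ℝ) :
    (Fin n → ℝ) → ℝ :=
  I.toList.foldr (fun i g => pderivI i g) f

/-- if `ψ` is smooth on `(0,1]^n` and every mixed partial over a
nonempty subset `I` of the variables satisfies `|∂^{|I|}ψ/∂x_I(x)| ≤ M ∏_{i∈I} x_i`,
then `ψ` extends continuously to `[0,1]^n`; in particular `lim_{x→0, x>0} ψ(x)` exists. -/
theorem stmt_14 (n : ℕ) (ψ : (Fin n → ℝ) → ℝ) (M : ℝ)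
    (hψ : ContDiffOn ℝ (⊤ : ℕ∞) ψ {x : Fin n → ℝ | ∀ i, 0 < x i ∧ x i ≤ 1})
    (hbd : ∀ I : Finset (Fin n), I.Nonempty →
      ∀ x ∈ {x : Fin n → ℝ | ∀ i, 0 < x i ∧ x i ≤ 1},
        |pderivSet I ψ x| ≤ M * ∏ i ∈ I, x i) :
    ∃ g : (Fin n → ℝ) → ℝ,
      ContinuousOn g {x : Fin n → ℝ | ∀ i, 0 ≤ x i ∧ x i ≤ 1} ∧
      (∀ x ∈ {x : Fin n → ℝ | ∀ i, 0 < x i ∧ x i ≤ 1}, g x = ψ x) ∧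
      Tendsto ψ (nhdsWithin 0 {x : Fin n → ℝ | ∀ i, 0 < x i ∧ x i ≤ 1})
        (nhds (g 0)) := by
  set S : Set (Fin n → ℝ) := {x : Fin n → ℝ | ∀ i, 0 < x i ∧ x i ≤ 1} with hS
  set U : Set (Fin n → ℝ) := Set.univ.pi (fun _ => Ioo (0:ℝ) 1) with hU
  have hUS : U ⊆ S := by
    intro x hx i
    have := hx i (mem_univ i)
    exact ⟨this.1, le_of_lt this.2⟩
  have hUopen : IsOpen U := isOpen_set_pi finite_univ (fun i _ => isOpen_Ioo)
  have hUconv : Convex ℝ U := convex_pi (fun i _ => convex_Ioo 0 1)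
  have hScl : S ⊆ closure U := by
    intro x hx
    rw [hU, closure_pi_set]
    intro i _
    simp only [closure_Ioo (by norm_num : (0:ℝ) ≠ 1)]
    exact ⟨le_of_lt (hx i).1, (hx i).2⟩
  set M' : ℝ := max M 0 with hM'
  have hM'0 : 0 ≤ M' := le_max_right _ _
  -- single-variable partial derivative bound via fderiv
  have hdiff : ∀ x ∈ U, DifferentiableAt ℝ ψ x := by
    intro x hx
    exact ((hψ.mono hUS).contDiffAt (hUopen.mem_nhds hx)).differentiableAt (by simp)
  have hfd : ∀ x ∈ U, ∀ i, fderiv ℝ ψ x (Pi.single i 1) = pderivI i ψ x := by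
    intro x hx i
    have h1 : HasDerivAt (fun t => ψ (Function.update x i t))
        (fderiv ℝ ψ x (Pi.single i 1)) (x i) := by
      have hc := hasDerivAt_update x i (x i)
      have hf : HasFDerivAt ψ (fderiv ℝ ψ x) (Function.update x i (x i)) := by
        rw [Function.update_eq_self]; exact (hdiff x hx).hasFDerivAt
      exact hf.comp_hasDerivAt (x i) hc
    exact (h1.deriv).symm
  have hfdbd : ∀ x ∈ U, ∀ i, |fderiv ℝ ψ x (Pi.single i 1)| ≤ M' := by
    intro x hx i
    rw [hfd x hx i]
    have h1 : |pderivI i ψ x| ≤ M * x i := by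
      have := hbd {i} (Finset.singleton_nonempty i) x (hUS hx)
      simpa [pderivSet, Finset.toList_singleton] using this
    have hxi := hx i (mem_univ i)
    calc |pderivI i ψ x| ≤ M * x i := h1
      _ ≤ M' * x i := by
          apply mul_le_mul_of_nonneg_right (le_max_left _ _) (le_of_lt hxi.1)
      _ ≤ M' * 1 := by
          apply mul_le_mul_of_nonneg_left (le_of_lt hxi.2) hM'0
      _ = M' := mul_one _
  -- operator norm bound
  have hopbd : ∀ x ∈ U, ‖fderiv ℝ ψ x‖ ≤ n * M' := by
    intro x hx
    apply ContinuousLinearMap.opNorm_le_bound _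
      (by positivity)
    intro v
    have hv : v = ∑ i : Fin n, v i • (Pi.single i (1:ℝ) : Fin n → ℝ) := by
      funext j
      rw [Finset.sum_apply]
      simp [Pi.single_apply]
    calc ‖fderiv ℝ ψ x v‖ = ‖∑ i : Fin n, v i • fderiv ℝ ψ x (Pi.single i 1)‖ := by
          conv_lhs => rw [hv]
          rw [map_sum]
          simp only [map_smul, smul_eq_mul]
      _ ≤ ∑ i : Fin n, ‖v i • fderiv ℝ ψ x (Pi.single i 1)‖ := norm_sum_le _ _
      _ ≤ ∑ i : Fin n, ‖v‖ * M' := by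
          apply Finset.sum_le_sum
          intro i _
          rw [norm_smul]
          apply mul_le_mul (norm_le_pi_norm v i) _ (norm_nonneg _) (norm_nonneg _)
          exact (hfdbd x hx i)
      _ = n * M' * ‖v‖ := by
          simp only [Finset.sum_const, Finset.card_univ, Fintype.card_fin, nsmul_eq_mul]
          ring
  -- Lipschitz on U
  set K : NNReal := Real.toNNReal (n * M') with hK
  have hKcoe : (K : ℝ) = n * M' := Real.coe_toNNReal _ (by positivity)
  have hlip : LipschitzOnWith K ψ U := by
    apply hUconv.lipschitzOnWith_of_nnnorm_fderiv_le hdiff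
    intro x hx
    rw [← NNReal.coe_le_coe, coe_nnnorm, hKcoe]
    exact hopbd x hx
  obtain ⟨g, hg_lip, hg_eq⟩ := hlip.extend_real
  have hg_cont : Continuous g := hg_lip.continuous
  -- g = ψ on all of S
  have hSeq : ∀ x ∈ S, g x = ψ x := by
    intro x hx
    have hne : (nhdsWithin x U).NeBot := mem_closure_iff_nhdsWithin_neBot.mp (hScl hx)
    have h1 : Tendsto ψ (nhdsWithin x U) (nhds (ψ x)) := by
      have := (hψ.continuousOn x hx).tendsto
      exact this.mono_left (nhdsWithin_mono x hUS)
    have h2 : Tendsto ψ (nhdsWithin x U) (nhds (g x)) := by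
      have h3 : Tendsto g (nhdsWithin x U) (nhds (g x)) :=
        (hg_cont.tendsto x).mono_left nhdsWithin_le_nhds
      apply h3.congr'
      filter_upwards [self_mem_nhdsWithin] with y hy
      exact (hg_eq hy).symm
    rw [tendsto_nhds_unique h1 h2]
  refine ⟨g, hg_cont.continuousOn, fun x hx => hSeq x hx, ?_⟩
  have h3 : Tendsto g (nhdsWithin 0 S) (nhds (g 0)) :=
    (hg_cont.tendsto 0).mono_left nhdsWithin_le_nhds
  apply h3.congr'
  filter_upwards [self_mem_nhdsWithin] with y hy
  exact hSeq y hy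
end

section
/- Let φ : (0,∞)^n → ℝ be such that ξ(x) := x^{-μ-1/2}φ(x) extends smoothly, with all T^k ξ having finite limits at 0 from the positive orthant. Define for r ∈ ℕ_0 the coefficients a_{2k} = (1/(2^{|k|} k!)) lim_{x→0⁺} T^k ξ(x) for |k| ≤ r, and the remainder R_{2r}(x) = ξ(x) − Σ_{|k|≤r} a_{2k} x^{2k}. Then for every multi-index k with |k| = r, lim_{x→0, x_i>0} T^k R_{2r}(x) = 0. -/
/-- The Bessel operator in the `i`-th variable:
`S_{μ_i} f = ∂²f/∂x_i² − (4μ_i²−1)/(4x_i²) f`. -/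
noncomputable def Svar {n : ℕ} (μ : Fin n → ℝ) (i : Fin n)
    (f : (Fin n → ℝ) → ℝ) : (Fin n → ℝ) → ℝ :=
  fun x => pderivI i (pderivI i f) x - (4 * μ i ^ 2 - 1) / (4 * x i ^ 2) * f x

/-- `S^k = S_{μ_1}^{k_1} ∘ … ∘ S_{μ_n}^{k_n}`. -/
noncomputable def Smul {n : ℕ} (μ : Fin n → ℝ) (k : Fin n → ℕ) :
    ((Fin n → ℝ) → ℝ) → ((Fin n → ℝ) → ℝ) :=
  ((List.finRange n).map (fun i => (Svar μ i)^[k i])).foldr (· ∘ ·) id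

/-- The weight `x^{-μ-1/2} = ∏ i, x_i^{-μ_i-1/2}`. -/
noncomputable def wgt {n : ℕ} (μ : Fin n → ℝ) (x : Fin n → ℝ) : ℝ :=
  ∏ i, x i ^ (-(μ i) - 1/2)

open Filter Set Function

variable {n : ℕ}

lemma posOrthant_isOpen (n : ℕ) : IsOpen (posOrthant n) := by
  have : posOrthant n = Set.pi Set.univ (fun _ => Set.Ioi (0:ℝ)) := by
    ext x; simp [posOrthant, Set.mem_pi]
  rw [this]
  exact isOpen_set_pi Set.finite_univ (fun i _ => isOpen_Ioi)

lemma update_mem_nhds {i : Fin n} {x : Fin n → ℝ} (hx : x ∈ posOrthant n) :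
    ∀ᶠ t in nhds (x i), Function.update x i t ∈ posOrthant n := by
  have hc : Continuous (fun t : ℝ => Function.update x i t) :=
    continuous_const.update i continuous_id
  have : update x i (x i) = x := Function.update_eq_self i x
  exact hc.continuousAt.preimage_mem_nhds
    ((posOrthant_isOpen n).mem_nhds (by rwa [this]))

/-- locality of pderivI -/
lemma pderivI_congr {i : Fin n} {f g : (Fin n → ℝ) → ℝ}
    (h : EqOn f g (posOrthant n)) {x : Fin n → ℝ} (hx : x ∈ posOrthant n) :
    pderivI i f x = pderivI i g x := by
  apply Filter.EventuallyEq.deriv_eq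
  filter_upwards [update_mem_nhds hx] with t ht using h ht

lemma Tvar_congr {i : Fin n} {f g : (Fin n → ℝ) → ℝ}
    (h : EqOn f g (posOrthant n)) :
    EqOn (Tvar i f) (Tvar i g) (posOrthant n) := fun x hx => by
  unfold Tvar; rw [pderivI_congr h hx]

lemma pderivI_eq_fderiv {i : Fin n} {f : (Fin n → ℝ) → ℝ} {x : Fin n → ℝ}
    (hf : DifferentiableAt ℝ f x) :
    pderivI i f x = fderiv ℝ f x (Pi.single i 1) := by
  have h2 : HasDerivAt (Function.update x i) (Pi.single i 1) (x i) :=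
    hasDerivAt_update x i (x i)
  have h3 : HasFDerivAt f (fderiv ℝ f x) (Function.update x i (x i)) := by
    rw [Function.update_eq_self i x]; exact hf.hasFDerivAt
  exact (h3.comp_hasDerivAt (x i) h2).deriv

/-- Bundled invariant for operators built from `Tvar`. -/
def TGood (F : ((Fin n → ℝ) → ℝ) → ((Fin n → ℝ) → ℝ)) : Prop :=
  (∀ f, ContDiffOn ℝ (⊤ : ℕ∞) f (posOrthant n) → ContDiffOn ℝ (⊤ : ℕ∞) (F f) (posOrthant n)) ∧
  (∀ f g, EqOn f g (posOrthant n) → EqOn (F f) (F g) (posOrthant n)) ∧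
  (∀ f g, ContDiffOn ℝ (⊤ : ℕ∞) f (posOrthant n) → ContDiffOn ℝ (⊤ : ℕ∞) g (posOrthant n) →
      EqOn (F (fun x => f x - g x)) (fun x => F f x - F g x) (posOrthant n)) ∧
  (∀ f g, ContDiffOn ℝ (⊤ : ℕ∞) f (posOrthant n) → ContDiffOn ℝ (⊤ : ℕ∞) g (posOrthant n) →
      EqOn (F (fun x => f x + g x)) (fun x => F f x + F g x) (posOrthant n))

lemma diffAt_of_smooth {f : (Fin n → ℝ) → ℝ} (hf : ContDiffOn ℝ (⊤ : ℕ∞) f (posOrthant n))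
    {x : Fin n → ℝ} (hx : x ∈ posOrthant n) : DifferentiableAt ℝ f x := by
  have := hf.contDiffAt ((posOrthant_isOpen n).mem_nhds hx)
  exact this.differentiableAt (by simp)

lemma Tvar_smooth {i : Fin n} {f : (Fin n → ℝ) → ℝ}
    (hf : ContDiffOn ℝ (⊤ : ℕ∞) f (posOrthant n)) :
    ContDiffOn ℝ (⊤ : ℕ∞) (Tvar i f) (posOrthant n) := by
  have hfd : ContDiffOn ℝ (⊤ : ℕ∞) (fun x => fderiv ℝ f x) (posOrthant n) :=
    hf.fderiv_of_isOpen (posOrthant_isOpen n) (by exact_mod_cast le_top)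
  have h1 : ContDiffOn ℝ (⊤ : ℕ∞)
      (fun x => (x i)⁻¹ * fderiv ℝ f x (Pi.single i 1)) (posOrthant n) := by
    apply ContDiffOn.mul
    · exact ((ContinuousLinearMap.proj i : (Fin n → ℝ) →L[ℝ] ℝ).contDiff.contDiffOn).inv
        (fun x hx => (hx i).ne')
    · exact hfd.clm_apply contDiffOn_const
  exact h1.congr (fun x hx => by
    unfold Tvar
    rw [pderivI_eq_fderiv (diffAt_of_smooth hf hx)])

lemma TGood_Tvar (i : Fin n) : TGood (Tvar i) := by
  refine ⟨fun f hf => Tvar_smooth hf, fun f g h => Tvar_congr h, ?_, ?_⟩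
  · intro f g hf hg x hx
    have hfd := diffAt_of_smooth hf hx
    have hgd := diffAt_of_smooth hg hx
    unfold Tvar
    rw [pderivI_eq_fderiv (hfd.fun_sub hgd), fderiv_fun_sub hfd hgd]
    simp [pderivI_eq_fderiv hfd, pderivI_eq_fderiv hgd, mul_sub]
  · intro f g hf hg x hx
    have hfd := diffAt_of_smooth hf hx
    have hgd := diffAt_of_smooth hg hx
    unfold Tvar
    rw [pderivI_eq_fderiv (hfd.fun_add hgd), fderiv_fun_add hfd hgd]
    simp [pderivI_eq_fderiv hfd, pderivI_eq_fderiv hgd, mul_add]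

lemma TGood_id : TGood (id : ((Fin n → ℝ) → ℝ) → _) :=
  ⟨fun _ hf => hf, fun _ _ h => h, fun _ _ _ _ => fun _ _ => rfl, fun _ _ _ _ => fun _ _ => rfl⟩

lemma TGood_comp {F G : ((Fin n → ℝ) → ℝ) → ((Fin n → ℝ) → ℝ)}
    (hF : TGood F) (hG : TGood G) : TGood (F ∘ G) := by
  obtain ⟨hF1, hF2, hF3, hF4⟩ := hF
  obtain ⟨hG1, hG2, hG3, hG4⟩ := hG
  refine ⟨fun f hf => hF1 _ (hG1 _ hf), fun f g h => hF2 _ _ (hG2 _ _ h), ?_, ?_⟩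
  · intro f g hf hg x hx
    have e1 : EqOn (F (G (fun x => f x - g x))) (F (fun x => G f x - G g x)) (posOrthant n) :=
      hF2 _ _ (hG3 _ _ hf hg)
    exact (e1 hx).trans (hF3 _ _ (hG1 _ hf) (hG1 _ hg) hx)
  · intro f g hf hg x hx
    have e1 : EqOn (F (G (fun x => f x + g x))) (F (fun x => G f x + G g x)) (posOrthant n) :=
      hF2 _ _ (hG4 _ _ hf hg)
    exact (e1 hx).trans (hF4 _ _ (hG1 _ hf) (hG1 _ hg) hx)

lemma TGood_iterate {F : ((Fin n → ℝ) → ℝ) → ((Fin n → ℝ) → ℝ)} (hF : TGood F) (m : ℕ) :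
    TGood (F^[m]) := by
  induction m with
  | zero => exact TGood_id
  | succ m ih =>
    rw [Function.iterate_succ]
    exact TGood_comp ih hF

lemma TGood_Tmul (k : Fin n → ℕ) : TGood (Tmul k) := by
  unfold Tmul
  generalize (List.finRange n) = L
  induction L with
  | nil => exact TGood_id
  | cons i L ih =>
    simp only [List.map_cons, List.foldr_cons]
    exact TGood_comp (TGood_iterate (TGood_Tvar i) (k i)) ih

lemma prod_update_pow (x : Fin n → ℝ) (i : Fin n) (t : ℝ) (e : Fin n → ℕ) :
    ∏ m, (Function.update x i t m) ^ e m
      = t ^ e i * ∏ m ∈ Finset.univ.erase i, x m ^ e m := by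
  rw [← Finset.mul_prod_erase Finset.univ _ (Finset.mem_univ i)]
  rw [Function.update_self]
  congr 1
  refine Finset.prod_congr rfl (fun m hm => ?_)
  rw [Function.update_of_ne (Finset.ne_of_mem_erase hm)]

lemma prod_pow_update (x : Fin n → ℝ) (i : Fin n) (q : ℕ) (e : Fin n → ℕ) :
    ∏ m, x m ^ (Function.update e i q m)
      = x i ^ q * ∏ m ∈ Finset.univ.erase i, x m ^ e m := by
  rw [← Finset.mul_prod_erase Finset.univ _ (Finset.mem_univ i)]
  rw [Function.update_self]
  congr 1
  refine Finset.prod_congr rfl (fun m hm => ?_)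
  rw [Function.update_of_ne (Finset.ne_of_mem_erase hm)]

lemma Tvar_mon (i : Fin n) (C : ℝ) (e : Fin n → ℕ) (hei : Even (e i)) :
    ∀ x ∈ posOrthant n, Tvar i (fun y => C * ∏ m, y m ^ e m) x
      = (C * e i) * ∏ m, x m ^ (Function.update e i (e i - 2) m) := by
  intro x hx
  have hxi : (0:ℝ) < x i := hx i
  set R : ℝ := ∏ m ∈ Finset.univ.erase i, x m ^ e m with hR
  have hfn : (fun t : ℝ => C * ∏ m, (Function.update x i t m) ^ e m)
      = fun t : ℝ => (C * R) * t ^ e i := by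
    funext t
    rw [prod_update_pow]; ring
  unfold Tvar pderivI
  rw [hfn, ((hasDerivAt_pow (e i) (x i)).const_mul (C * R)).deriv, prod_pow_update]
  rcases Nat.eq_zero_or_pos (e i) with h0 | hpos
  · simp [h0]
  · obtain ⟨c, hc⟩ := hei
    have h2 : 2 ≤ e i := by omega
    have hp : x i ^ (e i - 1) = x i ^ (e i - 2) * x i := by
      rw [← pow_succ]; congr 1; omega
    rw [hp]
    field_simp
    ring

lemma Tvar_iterate_mon (i : Fin n) (m : ℕ) (C : ℝ) (e : Fin n → ℕ) (he : ∀ p, Even (e p)) :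
    ∀ x ∈ posOrthant n, (Tvar i)^[m] (fun y => C * ∏ p, y p ^ e p) x
      = (C * ∏ t ∈ Finset.range m, ((e i : ℝ) - 2 * t))
        * ∏ p, x p ^ (Function.update e i (e i - 2 * m) p) := by
  induction m with
  | zero =>
    intro x hx
    simp only [Function.iterate_zero, id_eq, Finset.range_zero, Finset.prod_empty, mul_one,
      Nat.mul_zero, Nat.sub_zero, Function.update_eq_self]
  | succ m ih =>
    intro x hx
    rw [Function.iterate_succ_apply']
    set C' : ℝ := C * ∏ t ∈ Finset.range m, ((e i : ℝ) - 2 * t) with hC'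
    set e' : Fin n → ℕ := Function.update e i (e i - 2 * m) with he'
    have hcong : EqOn ((Tvar i)^[m] (fun y => C * ∏ p, y p ^ e p))
        (fun y => C' * ∏ p, y p ^ e' p) (posOrthant n) := fun y hy => ih y hy
    rw [Tvar_congr hcong hx]
    have he'even : Even (e' i) := by
      rw [he', Function.update_self]
      exact (he i).tsub (even_two_mul m)
    rw [Tvar_mon i C' e' he'even x hx]
    have hexp : Function.update e' i (e' i - 2) = Function.update e i (e i - 2 * (m + 1)) := by
      rw [he']
      rw [Function.update_idem, Function.update_self]
      have h9 : e i - 2 * m - 2 = e i - 2 * (m + 1) := by omega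
      rw [h9]
    rw [hexp]
    congr 1
    rw [Finset.prod_range_succ, hC']
    have : e' i = e i - 2 * m := by rw [he', Function.update_self]
    rw [this]
    rcases le_or_gt (2 * m) (e i) with hle | hlt
    · have : ((e i - 2 * m : ℕ) : ℝ) = (e i : ℝ) - 2 * m := by
        push_cast [hle]; ring
      rw [this]; ring
    · have hz : (∏ t ∈ Finset.range m, ((e i : ℝ) - 2 * t)) = 0 := by
        apply Finset.prod_eq_zero (i := e i / 2) (Finset.mem_range.mpr ?_)
        · obtain ⟨c, hc⟩ := he i
          have : e i / 2 = c := by omega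
          rw [this]
          have : ((e i : ℝ)) = 2 * c := by push_cast [hc]; ring
          rw [this]; ring
        · obtain ⟨c, hc⟩ := he i
          omega
      rw [hz]; ring

lemma Tmul_list_mon (k j : Fin n → ℕ) (C : ℝ) :
    ∀ L : List (Fin n), L.Nodup →
    ∀ x ∈ posOrthant n,
      ((L.map (fun i => (Tvar i)^[k i])).foldr (· ∘ ·) id) (fun y => C * ∏ p, y p ^ (2 * j p)) x
        = (C * ∏ i ∈ L.toFinset, ∏ t ∈ Finset.range (k i), (2 * (j i : ℝ) - 2 * t))
          * ∏ p, x p ^ (2 * j p - (if p ∈ L then 2 * k p else 0)) := by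
  intro L
  induction L with
  | nil =>
    intro _ x hx
    simp
  | cons i L ih =>
    intro hnd x hx
    have hiL : i ∉ L := (List.nodup_cons.mp hnd).1
    have hLnd : L.Nodup := (List.nodup_cons.mp hnd).2
    simp only [List.map_cons, List.foldr_cons, Function.comp_apply]
    set C' : ℝ := C * ∏ i' ∈ L.toFinset, ∏ t ∈ Finset.range (k i'), (2 * (j i' : ℝ) - 2 * t)
      with hC'
    set e' : Fin n → ℕ := fun p => 2 * j p - (if p ∈ L then 2 * k p else 0) with he'
    have hcong : EqOn
        (((L.map (fun i => (Tvar i)^[k i])).foldr (· ∘ ·) id) (fun y => C * ∏ p, y p ^ (2 * j p)))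
        (fun y => C' * ∏ p, y p ^ e' p) (posOrthant n) := fun y hy => ih hLnd y hy
    rw [(TGood_iterate (TGood_Tvar i) (k i)).2.1 _ _ hcong hx]
    have he'even : ∀ p, Even (e' p) := by
      intro p
      rw [he']
      by_cases hp : p ∈ L <;> simp [hp] <;> exact (even_two_mul _).tsub (even_two_mul _)
    rw [Tvar_iterate_mon i (k i) C' e' he'even x hx]
    have he'i : e' i = 2 * j i := by simp [he', hiL]
    congr 1
    · rw [List.toFinset_cons, Finset.prod_insert (by simpa using hiL), hC', he'i]
      push_cast
      ring
    · apply Finset.prod_congr rfl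
      intro p _
      congr 1
      rw [he'i]
      by_cases hp : p = i
      · subst hp
        rw [Function.update_self]
        simp [List.mem_cons]
      · rw [Function.update_of_ne hp, he']
        simp [List.mem_cons, hp]

lemma Tmul_mon (k j : Fin n → ℕ) (C : ℝ) :
    ∀ x ∈ posOrthant n,
      Tmul k (fun y => C * ∏ p, y p ^ (2 * j p)) x
        = (C * ∏ i, ∏ t ∈ Finset.range (k i), (2 * (j i : ℝ) - 2 * t))
          * ∏ p, x p ^ (2 * j p - 2 * k p) := by
  intro x hx
  unfold Tmul
  rw [Tmul_list_mon k j C (List.finRange n) (List.nodup_finRange n) x hx]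
  congr 1
  · rw [List.toFinset_finRange]
  · apply Finset.prod_congr rfl
    intro p _
    simp [List.mem_finRange]

lemma prod_range_succ_fact (m : ℕ) : ∏ t ∈ Finset.range m, (t + 1) = m.factorial := by
  induction m with
  | zero => simp
  | succ m ih => rw [Finset.prod_range_succ, ih, Nat.factorial_succ]; ring

lemma prod_range_fact (m : ℕ) :
    ∏ t ∈ Finset.range m, (2 * (m : ℝ) - 2 * t) = 2 ^ m * m.factorial := by
  have h1 : ∀ t ∈ Finset.range m, (2 * (m : ℝ) - 2 * t) = ((2 * m - 2 * t : ℕ) : ℝ) := by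
    intro t ht
    have := Finset.mem_range.mp ht
    have hle : 2 * t ≤ 2 * m := by omega
    push_cast [Nat.cast_sub hle]
    ring
  rw [Finset.prod_congr rfl h1, ← Nat.cast_prod]
  have h2 : ∏ t ∈ Finset.range m, (2 * m - 2 * t) = 2 ^ m * m.factorial := by
    rw [← Finset.prod_range_reflect]
    have h3 : ∀ t ∈ Finset.range m, 2 * m - 2 * (m - 1 - t) = 2 * (t + 1) := by
      intro t ht
      have := Finset.mem_range.mp ht
      omega
    rw [Finset.prod_congr rfl h3, Finset.prod_mul_distrib, Finset.prod_const,
      Finset.card_range, prod_range_succ_fact]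
  rw [h2]
  push_cast
  ring

lemma Tmul_mon_self (k : Fin n → ℕ) (C : ℝ) :
    ∀ x ∈ posOrthant n,
      Tmul k (fun y => C * ∏ p, y p ^ (2 * k p)) x
        = C * (2 ^ (∑ i, k i) * ∏ i, (Nat.factorial (k i) : ℝ)) := by
  intro x hx
  rw [Tmul_mon k k C x hx]
  have h1 : ∀ i : Fin n, ∏ t ∈ Finset.range (k i), (2 * (k i : ℝ) - 2 * t)
      = 2 ^ (k i) * (k i).factorial := fun i => prod_range_fact (k i)
  rw [Finset.prod_congr rfl (fun i _ => h1 i)]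
  simp only [Nat.sub_self, pow_zero, Finset.prod_const_one, mul_one]
  rw [Finset.prod_mul_distrib, ← Finset.prod_pow_eq_pow_sum]

lemma Tmul_mon_vanish (k j : Fin n → ℕ) (C : ℝ) (h : ∃ i, j i < k i) :
    ∀ x ∈ posOrthant n,
      Tmul k (fun y => C * ∏ p, y p ^ (2 * j p)) x = 0 := by
  intro x hx
  rw [Tmul_mon k j C x hx]
  obtain ⟨i, hi⟩ := h
  have hz : ∏ t ∈ Finset.range (k i), (2 * (j i : ℝ) - 2 * t) = 0 :=
    Finset.prod_eq_zero (Finset.mem_range.mpr hi) (by ring)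
  rw [Finset.prod_eq_zero (Finset.mem_univ i) hz]
  ring

lemma Tmul_zero (k : Fin n → ℕ) : ∀ x ∈ posOrthant n, Tmul k (fun _ => (0:ℝ)) x = 0 := by
  intro x hx
  have h0 : EqOn (fun _ : Fin n → ℝ => (0:ℝ))
      (fun y : Fin n → ℝ => (0:ℝ) * ∏ p, y p ^ (2 * (fun _ : Fin n => 0) p)) (posOrthant n) :=
    fun y _ => by simp
  rw [(TGood_Tmul k).2.1 _ _ h0 hx, Tmul_mon k (fun _ => 0) 0 x hx]
  ring

lemma Tmul_sum (k : Fin n → ℕ) {ι : Type*} (s : Finset ι) (h : ι → (Fin n → ℝ) → ℝ)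
    (hh : ∀ j ∈ s, ContDiffOn ℝ (⊤ : ℕ∞) (h j) (posOrthant n)) :
    ∀ x ∈ posOrthant n, Tmul k (fun y => ∑ j ∈ s, h j y) x = ∑ j ∈ s, Tmul k (h j) x := by
  classical
  induction s using Finset.induction with
  | empty =>
    intro x hx
    simpa using Tmul_zero k x hx
  | @insert a s ha ih =>
    intro x hx
    have hsum : ContDiffOn ℝ (⊤ : ℕ∞) (fun y => ∑ j ∈ s, h j y) (posOrthant n) :=
      ContDiffOn.sum (fun j hj => hh j (Finset.mem_insert_of_mem hj))
    have hins : EqOn (fun y => ∑ j ∈ insert a s, h j y)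
        (fun y => h a y + ∑ j ∈ s, h j y) (posOrthant n) :=
      fun y _ => by simp [Finset.sum_insert ha]
    rw [(TGood_Tmul k).2.1 _ _ hins hx,
      (TGood_Tmul k).2.2.2 _ _ (hh a (Finset.mem_insert_self a s)) hsum hx]
    have := ih (fun j hj => hh j (Finset.mem_insert_of_mem hj)) x hx
    simp only [this, Finset.sum_insert ha]

open Filter

/-- if all `T^j ξ` with `|j| ≤ r` have the prescribed finite limits
`2^{|j|} j! a_j` at `0⁺`, then the Taylor remainder
`R_{2r} = ξ − Σ_{|j|≤r} a_j x^{2j}` satisfies `T^k R_{2r}(x) → 0` as `x → 0⁺`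
for every multi-index `k` with `|k| = r`. -/
theorem stmt_15 (n : ℕ) (r : ℕ) (ξ : (Fin n → ℝ) → ℝ)
    (hξ : ContDiffOn ℝ (⊤ : ℕ∞) ξ (posOrthant n))
    (a : (Fin n → ℕ) → ℝ)
    (hlim : ∀ j : Fin n → ℕ, (∑ i, j i) ≤ r →
      Tendsto (Tmul j ξ) (nhdsWithin 0 (posOrthant n))
        (nhds ((2 : ℝ) ^ (∑ i, j i) * (∏ i, (Nat.factorial (j i) : ℝ)) * a j)))
    (k : Fin n → ℕ) (hk : (∑ i, k i) = r) :
    Tendsto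
      (Tmul k (fun x => ξ x -
        ∑ j ∈ (Finset.Iic (fun _ => r : Fin n → ℕ)).filter (fun j => (∑ i, j i) ≤ r),
          a j * ∏ i, x i ^ (2 * j i)))
      (nhdsWithin 0 (posOrthant n)) (nhds 0) := by
  classical
  set s := (Finset.Iic (fun _ => r : Fin n → ℕ)).filter (fun j => (∑ i, j i) ≤ r) with hs
  set h : (Fin n → ℕ) → (Fin n → ℝ) → ℝ := fun j y => a j * ∏ i, y i ^ (2 * j i) with hh
  have hξ' : ContDiffOn ℝ (⊤ : ℕ∞) ξ (posOrthant n) := hξ.of_le (by simp)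
  have hhsm : ∀ j, ContDiffOn ℝ (⊤ : ℕ∞) (h j) (posOrthant n) := by
    intro j
    apply ContDiff.contDiffOn
    exact contDiff_const.mul (contDiff_prod (fun i _ =>
      ((ContinuousLinearMap.proj i : (Fin n → ℝ) →L[ℝ] ℝ).contDiff.pow (2 * j i))))
  have hsum : ContDiffOn ℝ (⊤ : ℕ∞) (fun y => ∑ j ∈ s, h j y) (posOrthant n) :=
    ContDiffOn.sum (fun j _ => hhsm j)
  have hks : k ∈ s := by
    rw [hs, Finset.mem_filter, Finset.mem_Iic]
    refine ⟨?_, hk.le⟩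
    intro i
    calc k i ≤ ∑ i, k i := Finset.single_le_sum (fun _ _ => Nat.zero_le _) (Finset.mem_univ i)
    _ = r := hk
  -- the key pointwise identity on the orthant
  have key : ∀ x ∈ posOrthant n,
      Tmul k (fun y => ξ y - ∑ j ∈ s, h j y) x
        = Tmul k ξ x - a k * (2 ^ r * ∏ i, (Nat.factorial (k i) : ℝ)) := by
    intro x hx
    have e1 := (TGood_Tmul k).2.2.1 ξ (fun y => ∑ j ∈ s, h j y) hξ' hsum hx
    rw [e1]
    have e2 := Tmul_sum k s h (fun j _ => hhsm j) x hx
    simp only [e2]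
    have e3 : ∑ j ∈ s, Tmul k (h j) x = a k * (2 ^ r * ∏ i, (Nat.factorial (k i) : ℝ)) := by
      rw [Finset.sum_eq_single k]
      · have := Tmul_mon_self k (a k) x hx
        rw [hh]
        rw [this]
        rw [hk]
      · intro j hj hjk
        have hjr : (∑ i, j i) ≤ r := (Finset.mem_filter.mp hj).2
        have hex : ∃ i, j i < k i := by
          by_contra hcon
          push_neg at hcon
          have hle : ∀ i ∈ Finset.univ, k i ≤ j i := fun i _ => hcon i
          have hsle : (∑ i, k i) ≤ ∑ i, j i := Finset.sum_le_sum hle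
          have hseq : (∑ i, k i) = ∑ i, j i := le_antisymm hsle (hk ▸ hjr)
          have := (Finset.sum_eq_sum_iff_of_le hle).mp hseq
          exact hjk (funext fun i => ((this i (Finset.mem_univ i)).symm))
        exact Tmul_mon_vanish k j (a j) hex x hx
      · intro hnk
        exact absurd hks hnk
    rw [e3]
  have hC : (2 : ℝ) ^ (∑ i, k i) * (∏ i, (Nat.factorial (k i) : ℝ)) * a k
      - a k * (2 ^ r * ∏ i, (Nat.factorial (k i) : ℝ)) = 0 := by
    rw [hk]; ring
  have hT : Tendsto (fun x => Tmul k ξ x - a k * (2 ^ r * ∏ i, (Nat.factorial (k i) : ℝ)))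
      (nhdsWithin 0 (posOrthant n)) (nhds 0) := by
    rw [← hC]
    exact (hlim k hk.le).sub tendsto_const_nhds
  apply hT.congr'
  filter_upwards [self_mem_nhdsWithin] with x hx
  exact (key x hx).symm
end

section
/- For μ ≥ -1/2 and k ∈ ℕ_0, and any φ in the Zemanian space ℋ_μ on (0,∞) (smooth φ such that sup_x |(1+x²)^m T^k{x^{-μ-1/2}φ(x)}| < ∞ for all m, k), the functional φ ↦ C_μ lim_{x→0⁺} T^k{x^{-μ-1/2}φ(x)} (with C_μ = 2^μ Γ(μ+1)) is a well-defined continuous linear functional on ℋ_μ, bounded in absolute value by C_μ γ_{0,k}^μ(φ) where γ_{0,k}^μ(φ) = sup_{x>0} |T^k{x^{-μ-1/2}φ(x)}|. -/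
open Set Filter

lemma Tone_contDiffOn {f : ℝ → ℝ} (hf : ContDiffOn ℝ (⊤ : ℕ∞) f (Ioi 0)) :
    ContDiffOn ℝ (⊤ : ℕ∞) (Tone f) (Ioi 0) := by
  apply ContDiffOn.mul
  · exact ContDiffOn.inv contDiffOn_id (fun x hx => ne_of_gt hx)
  · exact hf.deriv_of_isOpen isOpen_Ioi (by simp)

lemma Tone_iter_contDiffOn {f : ℝ → ℝ} (hf : ContDiffOn ℝ (⊤ : ℕ∞) f (Ioi 0)) (k : ℕ) :
    ContDiffOn ℝ (⊤ : ℕ∞) (Tone^[k] f) (Ioi 0) := by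
  induction k with
  | zero => exact hf
  | succ n ih => rw [Function.iterate_succ_apply']; exact Tone_contDiffOn ih

/-- for `μ ≥ -1/2`, `k ∈ ℕ` and `φ` in the Zemanian space `ℋ_μ`,
the limit defining `(T^k δ_μ, φ) = C_μ lim_{x→0⁺} T^k{x^{-μ-1/2}φ(x)}` exists, and
`|(T^k δ_μ, φ)| ≤ C_μ γ_{0,k}^μ(φ)` where `γ_{0,k}^μ(φ) = sup_{x>0} |T^k{x^{-μ-1/2}φ(x)}|`
and `C_μ = 2^μ Γ(μ+1)`. -/
theorem stmt_16 (μ : ℝ) (hμ : -(1/2 : ℝ) ≤ μ) (k : ℕ) (φ : ℝ → ℝ)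
    (hφsm : ContDiffOn ℝ (⊤ : ℕ∞) φ (Ioi 0))
    (hφ : ∀ m k' : ℕ, ∃ B : ℝ, ∀ x : ℝ, 0 < x →
      |(1 + x ^ 2) ^ m * Tone^[k'] (fun y => y ^ (-μ - 1/2) * φ y) x| ≤ B) :
    ∃ L : ℝ,
      Tendsto (Tone^[k] (fun y => y ^ (-μ - 1/2) * φ y))
        (nhdsWithin 0 (Ioi 0)) (nhds L) ∧
      |(2 : ℝ) ^ μ * Real.Gamma (μ + 1) * L| ≤
        (2 : ℝ) ^ μ * Real.Gamma (μ + 1) *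
          ⨆ x : Ioi (0 : ℝ), |Tone^[k] (fun y => y ^ (-μ - 1/2) * φ y) x.1| := by
  set F : ℝ → ℝ := fun y => y ^ (-μ - 1/2) * φ y with hF
  set g : ℝ → ℝ := Tone^[k] F with hg
  -- smoothness of F on Ioi 0
  have hFsm : ContDiffOn ℝ (⊤ : ℕ∞) F (Ioi 0) := by
    apply ContDiffOn.mul _ hφsm
    intro x hx
    exact (Real.contDiffAt_rpow_const_of_ne (p := -μ - 1/2) (ne_of_gt hx)).contDiffWithinAt
  have hgsm : ContDiffOn ℝ (⊤ : ℕ∞) g (Ioi 0) := Tone_iter_contDiffOn hFsm k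
  have hgdiff : ∀ x : ℝ, 0 < x → DifferentiableAt ℝ g x := by
    intro x hx
    have := (hgsm x hx).differentiableWithinAt (by simp)
    exact this.differentiableAt (isOpen_Ioi.mem_nhds hx)
  -- bound on g
  obtain ⟨B0, hB0⟩ := hφ 0 k
  have hB0' : ∀ x : ℝ, 0 < x → |g x| ≤ B0 := by
    intro x hx; simpa using hB0 x hx
  -- bound on deriv g
  obtain ⟨B1, hB1⟩ := hφ 0 (k + 1)
  have hB1' : ∀ x : ℝ, 0 < x → |deriv g x| ≤ B1 * x := by
    intro x hx
    have h := hB1 x hx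
    rw [Function.iterate_succ_apply'] at h
    simp only [pow_zero, one_mul] at h
    have : Tone g x = x⁻¹ * deriv g x := rfl
    rw [this, abs_mul, abs_inv, abs_of_pos hx] at h
    calc |deriv g x| = x * (x⁻¹ * |deriv g x|) := by field_simp
    _ ≤ x * B1 := by
        apply mul_le_mul_of_nonneg_left h hx.le
    _ = B1 * x := mul_comm _ _
  have hB1nn : 0 ≤ B1 := le_trans (abs_nonneg _) (hB1 1 one_pos)
  -- the auxiliary monotone function h
  set h : ℝ → ℝ := fun x => g x + B1 * x with hh
  have hmono : MonotoneOn h (Ioo (0:ℝ) 1) := by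
    apply monotoneOn_of_deriv_nonneg (convex_Ioo 0 1)
    · intro x hx
      exact ((hgdiff x hx.1).add ((differentiableAt_id.const_mul B1))).continuousAt.continuousWithinAt
    · rw [interior_Ioo]
      intro x hx
      exact ((hgdiff x hx.1).add ((differentiableAt_id.const_mul B1))).differentiableWithinAt
    · rw [interior_Ioo]
      intro x hx
      have H : HasDerivAt h (deriv g x + B1) x := by
        have H0 := (hgdiff x hx.1).hasDerivAt.add ((hasDerivAt_id x).const_mul B1)
        simp only [mul_one] at H0
        exact H0
      rw [H.deriv]
      have := hB1' x hx.1
      have h1 : B1 * x ≤ B1 * 1 := mul_le_mul_of_nonneg_left hx.2.le hB1nn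
      have h2 : -(B1 * x) ≤ deriv g x := neg_le_of_abs_le this
      linarith
  have hbdd : BddBelow (h '' Ioo (0:ℝ) 1) := by
    refine ⟨-B0, ?_⟩
    rintro y ⟨x, hx, rfl⟩
    have := hB0' x hx.1
    have h2 : -B0 ≤ g x := neg_le_of_abs_le this
    have : 0 ≤ B1 * x := mul_nonneg hB1nn hx.1.le
    simp only [hh]; linarith
  have hne : (Ioo (0:ℝ) 1).Nonempty := ⟨1/2, by norm_num⟩
  have htend_h : Tendsto h (nhdsWithin 0 (Ioi 0)) (nhds (sInf (h '' Ioo (0:ℝ) 1))) :=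
    hmono.tendsto_nhdsWithin_Ioo_right hne hbdd
  have htend_lin : Tendsto (fun x : ℝ => B1 * x) (nhdsWithin 0 (Ioi 0)) (nhds 0) := by
    have : Tendsto (fun x : ℝ => B1 * x) (nhds 0) (nhds (B1 * 0)) :=
      (continuous_const.mul continuous_id).tendsto 0
    rw [mul_zero] at this
    exact this.mono_left nhdsWithin_le_nhds
  set L : ℝ := sInf (h '' Ioo (0:ℝ) 1) - 0 with hL
  have htend_g : Tendsto g (nhdsWithin 0 (Ioi 0)) (nhds L) := by
    have : g = fun x => h x - B1 * x := by funext x; simp [hh]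
    rw [this, hL]
    exact htend_h.sub htend_lin
  refine ⟨L, htend_g, ?_⟩
  -- the sup bound
  have hBdd : BddAbove (range fun x : Ioi (0:ℝ) => |g x.1|) := by
    refine ⟨B0, ?_⟩
    rintro y ⟨x, rfl⟩
    exact hB0' x.1 x.2
  have habs : |L| ≤ ⨆ x : Ioi (0:ℝ), |g x.1| := by
    have htabs : Tendsto (fun x => |g x|) (nhdsWithin 0 (Ioi 0)) (nhds |L|) :=
      htend_g.abs
    apply le_of_tendsto htabs
    filter_upwards [self_mem_nhdsWithin] with x hx
    exact le_ciSup hBdd ⟨x, hx⟩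
  have hC : 0 ≤ (2:ℝ) ^ μ * Real.Gamma (μ + 1) :=
    mul_nonneg (Real.rpow_nonneg (by norm_num) μ)
      (Real.Gamma_pos_of_pos (by linarith)).le
  rw [abs_mul, abs_of_nonneg hC]
  exact mul_le_mul_of_nonneg_left habs hC
end
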